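/- arXiv:1910.06728 — 6 statements merged into one kernel-verified Lean document; each statement's English description precedes it below -/
import Mathlib

section
/- Let U be an r-dimensional linear subspace of the polynomial ring ℝ[x]. Then the linear span of all products pq with p, q ∈ U has dimension at least 2r − 1. -/
/-!
For a finite-dimensional space `V` of polynomials let `D(V)` be the set of degrees of its nonzero
elements. Then `dim V = #D(V)`: reading off the coefficients at the degrees in `D(V)` is injective
on `V`, while polynomials of distinct degrees are linearly independent. Since
`deg (p * q) = deg p + deg q`, the degrees of `U * U` contain the sumset `D(U) + D(U)`, which by
Cauchy–Davenport in `ℕ` has at least `2 #D(U) - 1` elements.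
-/

open Polynomial Module Function Finset
open scoped Pointwise

namespace Polynomial

theorem linearIndependent_of_natDegree_injective {R ι : Type*} [CommRing R] [IsDomain R]
    {p : ι → R[X]} (hp : ∀ i, p i ≠ 0) (hdeg : Injective fun i => (p i).natDegree) :
    LinearIndependent R p := by
  refine linearIndependent_iff'.mpr fun s g hsum i hi => by_contra fun hgi => ?_
  have hdisj : Set.Pairwise {j | j ∈ s ∧ g j • p j ≠ 0} (Ne on degree ∘ fun j => g j • p j) := by
    rintro j ⟨-, hj⟩ k ⟨-, hk⟩ hjk
    simp only [onFun, comp_apply, degree_eq_natDegree hj, degree_eq_natDegree hk,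
      natDegree_smul _ (left_ne_zero_of_smul hj), natDegree_smul _ (left_ne_zero_of_smul hk)]
    exact_mod_cast hdeg.ne hjk
  have hsup := degree_sum_eq_of_disjoint _ s hdisj
  rw [hsum, degree_zero, eq_comm, Finset.sup_eq_bot_iff] at hsup
  exact smul_ne_zero hgi (hp i) (degree_eq_bot.mp (hsup i hi))

end Polynomial

namespace Submodule

variable {R : Type*}

def natDegrees [Semiring R] (V : Submodule R R[X]) : Set ℕ :=
  {d | ∃ p ∈ V, p ≠ 0 ∧ p.natDegree = d}

theorem finrank_le_card_of_natDegrees_subset [Ring R] [StrongRankCondition R]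
    {V : Submodule R R[X]} {s : Finset ℕ} (h : V.natDegrees ⊆ s) : finrank R V ≤ #s := by
  let φ : V →ₗ[R] (s → R) := LinearMap.pi fun d => (lcoeff R d).comp V.subtype
  have hφ : Injective φ := by
    refine (injective_iff_map_eq_zero φ).mpr fun p hp => by_contra fun hp0 => ?_
    have hp0' : (p : R[X]) ≠ 0 := by simpa using hp0
    have hcoeff := congr_fun hp ⟨_, h ⟨p, p.2, hp0', rfl⟩⟩
    exact leadingCoeff_ne_zero.mpr hp0' hcoeff
  calc finrank R V ≤ finrank R (s → R) := φ.finrank_le_finrank_of_injective hφ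
    _ = #s := by simp

theorem card_le_finrank_of_subset_natDegrees [CommRing R] [IsDomain R] {V : Submodule R R[X]}
    [Module.Finite R V] {s : Finset ℕ} (h : ↑s ⊆ V.natDegrees) : #s ≤ finrank R V := by
  choose p hpV hp0 hpdeg using fun d : s => h d.2
  have hli : LinearIndependent R p :=
    linearIndependent_of_natDegree_injective hp0 fun d e hde =>
      Subtype.ext <| by simpa only [hpdeg] using hde
  have hliV : LinearIndependent R fun d => (⟨p d, hpV d⟩ : V) := .of_comp V.subtype hli
  simpa using hliV.fintype_card_le_finrank

theorem natDegrees_finite [CommRing R] [IsDomain R] (V : Submodule R R[X]) [Module.Finite R V] :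
    V.natDegrees.Finite := by
  by_contra hinf
  obtain ⟨s, hs, hcard⟩ := Set.Infinite.exists_subset_card_eq hinf (finrank R V + 1)
  have := card_le_finrank_of_subset_natDegrees hs
  omega

theorem add_natDegrees_subset_natDegrees_mul [CommSemiring R] [NoZeroDivisors R]
    (U V : Submodule R R[X]) : U.natDegrees + V.natDegrees ⊆ (U * V).natDegrees := by
  rintro _ ⟨_, ⟨p, hpU, hp0, rfl⟩, _, ⟨q, hqV, hq0, rfl⟩, rfl⟩
  exact ⟨p * q, mul_mem_mul hpU hqV, mul_ne_zero hp0 hq0, natDegree_mul hp0 hq0⟩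

theorem span_setOf_mul_eq_mul {A : Type*} [CommSemiring R] [Semiring A] [Algebra R A]
    (U V : Submodule R A) : span R {f | ∃ p ∈ U, ∃ q ∈ V, f = p * q} = U * V := by
  rw [mul_eq_span_mul_set]
  congr 1
  ext f
  simp [Set.mem_mul, eq_comm]

end Submodule

open Submodule

/-- If `U` is an `r`-dimensional subspace of `ℝ[x]`, then the span of all
products `p * q` with `p, q ∈ U` has dimension at least `2r - 1`. -/
theorem dim_products_ge_two_r_sub_one
    (U : Submodule ℝ (Polynomial ℝ)) [FiniteDimensional ℝ U] (r : ℕ)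
    (hU : Module.finrank ℝ U = r) :
    2 * r - 1 ≤ Module.finrank ℝ
      (Submodule.span ℝ {f : Polynomial ℝ | ∃ p ∈ U, ∃ q ∈ U, f = p * q}) := by
  rw [span_setOf_mul_eq_mul]
  have hUfg : U.FG := Module.Finite.iff_fg.mp ‹_›
  have : Module.Finite ℝ ↥(U * U) := Module.Finite.iff_fg.mpr (hUfg.mul hUfg)
  set D := (natDegrees_finite U).toFinset
  have hr : r ≤ #D := hU ▸ finrank_le_card_of_natDegrees_subset (by simp [D])
  obtain hD | hD := D.eq_empty_or_nonempty
  · simp_all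
  calc 2 * r - 1 ≤ #D + #D - 1 := by omega
    _ ≤ #(D + D) := cauchy_davenport_add_of_linearOrder_isCancelAdd hD hD
    _ ≤ finrank ℝ ↥(U * U) := card_le_finrank_of_subset_natDegrees <| by
      rw [Finset.coe_add, Set.Finite.coe_toFinset]
      exact add_natDegrees_subset_natDegrees_mul U U
end

section
/- Let U be an r-dimensional complex linear subspace of ℂ[x]. Then the linear span of all products pq with p, q ∈ U has complex dimension at least 2r − 1. -/
/-!
The dimension of a finite-dimensional space `V` of polynomials equals the number of degrees
attained by its nonzero elements: polynomials of distinct degrees are independent, and a member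
of `V` whose coefficients vanish at all those degrees has zero leading coefficient. Degrees add
under multiplication, so the degree set of `UU` contains `D + D`, where `D` is the degree set of
`U`, and `|D + D| ≥ 2|D| - 1` by Cauchy–Davenport in `ℕ`.
-/

open Polynomial Module Submodule
open scoped Pointwise

namespace Polynomial

variable {K : Type*} [Field K]

theorem linearIndependent_of_injective_natDegree {ι : Type*} {p : ι → K[X]}
    (hp : ∀ i, p i ≠ 0) (hdeg : Function.Injective (natDegree ∘ p)) :
    LinearIndependent K p := by
  have hdeg_smul : ∀ (c : K) j, c • p j ≠ 0 → (c • p j).degree = (p j).natDegree := by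
    intro c j hcp
    have hc : c ≠ 0 := by rintro rfl; simp at hcp
    rw [smul_eq_C_mul, degree_C_mul hc, degree_eq_natDegree (hp j)]
  refine linearIndependent_iff'.mpr fun s g hsum i hi => ?_
  have hsup := degree_sum_eq_of_disjoint (fun j => g j • p j) s fun j hj k hk hjk => by
    simp only [Function.onFun, Function.comp_apply]
    rw [hdeg_smul _ j hj.2, hdeg_smul _ k hk.2, Ne, Nat.cast_inj]
    exact hdeg.ne hjk
  rw [hsum, degree_zero, eq_comm, Finset.sup_eq_bot_iff] at hsup
  simpa [hp i] using hsup i hi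

def natDegreeSet (V : Submodule K K[X]) : Set ℕ :=
  {n | ∃ p ∈ V, p ≠ 0 ∧ p.natDegree = n}

theorem finrank_le_card_of_natDegreeSet_subset {V : Submodule K K[X]} {s : Finset ℕ}
    (hs : natDegreeSet V ⊆ s) : finrank K V ≤ s.card := by
  let coeffsOn : V →ₗ[K] s → K :=
    { toFun := fun p d => (p : K[X]).coeff d
      map_add' := fun p q => by ext; simp
      map_smul' := fun c p => by ext; simp }
  have hinj : Function.Injective coeffsOn := by
    refine (injective_iff_map_eq_zero coeffsOn).mpr fun p hp => ?_
    by_contra hne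
    have hdeg : (p : K[X]).natDegree ∈ s := hs ⟨p, p.2, by simpa using hne, rfl⟩
    have hlead : (p : K[X]).leadingCoeff = 0 := congrFun hp ⟨_, hdeg⟩
    exact hne (by simpa using hlead)
  simpa using LinearMap.finrank_le_finrank_of_injective hinj

theorem card_le_finrank_of_subset_natDegreeSet {V : Submodule K K[X]} [FiniteDimensional K V]
    {s : Finset ℕ} (hs : ↑s ⊆ natDegreeSet V) : s.card ≤ finrank K V := by
  choose p hpV hp0 hpdeg using fun d : s => hs d.2
  have hli : LinearIndependent K fun d => (⟨p d, hpV d⟩ : V) :=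
    .of_comp V.subtype <| linearIndependent_of_injective_natDegree hp0 fun d e hde => by
      simpa [hpdeg] using hde
  simpa using hli.fintype_card_le_finrank

theorem natDegreeSet_finite (V : Submodule K K[X]) [FiniteDimensional K V] :
    (natDegreeSet V).Finite := by
  by_contra hinf
  obtain ⟨s, hs, hcard⟩ := Set.Infinite.exists_subset_card_eq hinf (finrank K V + 1)
  have := card_le_finrank_of_subset_natDegreeSet hs
  omega

theorem natDegreeSet_add_subset_natDegreeSet_mul (V W : Submodule K K[X]) :
    natDegreeSet V + natDegreeSet W ⊆ natDegreeSet (V * W) := by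
  rintro _ ⟨_, ⟨p, hpV, hp0, rfl⟩, _, ⟨q, hqW, hq0, rfl⟩, rfl⟩
  exact ⟨p * q, mul_mem_mul hpV hqW, mul_ne_zero hp0 hq0, natDegree_mul hp0 hq0⟩

end Polynomial

/-- If `U` is an `r`-dimensional subspace of `ℂ[x]`, then the span of all
products `p * q` with `p, q ∈ U` has dimension at least `2r - 1`. -/
theorem dim_products_ge_two_r_sub_one_complex
    (U : Submodule ℂ (Polynomial ℂ)) [FiniteDimensional ℂ U] (r : ℕ)
    (hU : Module.finrank ℂ U = r) :
    2 * r - 1 ≤ Module.finrank ℂ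
      (Submodule.span ℂ {f : Polynomial ℂ | ∃ p ∈ U, ∃ q ∈ U, f = p * q}) := by
  have hspan : span ℂ {f : ℂ[X] | ∃ p ∈ U, ∃ q ∈ U, f = p * q} = U * U := by
    rw [mul_eq_span_mul_set]
    congr 1
    ext f
    simp [Set.mem_mul, eq_comm]
  rw [hspan]
  have : FiniteDimensional ℂ ↥(U * U) :=
    Module.Finite.iff_fg.mpr <| (Module.Finite.iff_fg.mp ‹_›).mul (Module.Finite.iff_fg.mp ‹_›)
  set D := (natDegreeSet_finite U).toFinset
  have hr : r ≤ D.card := hU ▸ finrank_le_card_of_natDegreeSet_subset (by simp [D])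
  have hDD : (D + D).card ≤ finrank ℂ ↥(U * U) :=
    card_le_finrank_of_subset_natDegreeSet <| by
      simpa [D] using natDegreeSet_add_subset_natDegreeSet_mul U U
  rcases D.eq_empty_or_nonempty with hD | hD
  · simp_all
  · have := cauchy_davenport_add_of_linearOrder_isCancelAdd hD hD
    omega
end

section
/- Let U be a face subspace for the Hermitian Gram spectrahedron H⁺(f) of f. Then the corresponding face F(U) has real dimension dim_ℂ(U)² − dim_ℂ(U·conj(U)). -/
/-!
Let `μ M = ∑ i j, M i j • u i * star (u j)` be the Gram map and `M₀` a positive definite Gram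
matrix of `f`. Every difference of two psd Gram matrices of `f` is a Hermitian matrix in `ker μ`;
conversely, for Hermitian `H ∈ ker μ` the matrix `M₀ + ε H` is still a psd Gram matrix of `f` when
`ε > 0` is small. So the face spans the Hermitian part of `ker μ`. Since `μ (Mᴴ) = star (μ M)`,
`ker μ` is closed under `ᴴ`, and for such a complex subspace `K = Herm(K) ⊕ i Herm(K)`, whence
`dim_ℝ Herm(K) = dim_ℂ K = r² - dim_ℂ (range μ)`.
-/

open scoped ComplexOrder MatrixOrder ComplexStarModule Matrix

theorem Matrix.isUnit_of_rank_eq_card {K n : Type*} [Field K] [Fintype n] [DecidableEq n]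
    {A : Matrix n n K} (h : A.rank = Fintype.card n) : IsUnit A := by
  rw [← mulVec_surjective_iff_isUnit, ← coe_mulVecLin, ← LinearMap.range_eq_top]
  exact Submodule.eq_top_of_finrank_eq (h.trans (Module.finrank_fintype_fun_eq_card K).symm)

theorem Matrix.PosSemidef.posDef_of_rank_eq_card {𝕜 n : Type*} [RCLike 𝕜] [Fintype n]
    [DecidableEq n] {A : Matrix n n 𝕜} (hA : A.PosSemidef) (h : A.rank = Fintype.card n) :
    A.PosDef :=
  hA.posDef_iff_isUnit.mpr (isUnit_of_rank_eq_card h)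

theorem IsStrictlyPositive.exists_pos_nonneg_add_smul {A : Type*} [TopologicalSpace A] [Ring A]
    [StarRing A] [PartialOrder A] [StarOrderedRing A] [Algebra ℝ A] [PosSMulMono ℝ A]
    [NonnegSpectrumClass ℝ A] [ContinuousFunctionalCalculus ℝ A IsSelfAdjoint] {a h : A}
    (ha : IsStrictlyPositive a) (hh : IsSelfAdjoint h) : ∃ ε > (0 : ℝ), 0 ≤ a + ε • h := by
  cases subsingleton_or_nontrivial A
  · exact ⟨1, one_pos, (Subsingleton.elim _ _).le⟩
  obtain ⟨r, hr, hra⟩ := (CFC.exists_pos_algebraMap_le_iff ha.isSelfAdjoint).mpr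
    fun x hx => ha.spectrum_pos hx
  obtain ⟨m, hm⟩ : BddBelow (spectrum ℝ h) :=
    (ContinuousFunctionalCalculus.isCompact_spectrum (R := ℝ) h).bddBelow
  have hmh : algebraMap ℝ A m ≤ h := algebraMap_le_of_le_spectrum fun x hx => hm hx
  set ε := r / (|m| + 1)
  have hε : 0 < ε := by positivity
  refine ⟨ε, hε, ?_⟩
  have hεm : 0 ≤ r + ε * m := by
    have : ε * |m| ≤ r := by
      rw [div_mul_eq_mul_div, div_le_iff₀ (by positivity)]
      nlinarith [abs_nonneg m]
    nlinarith [neg_abs_le m]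
  calc (0 : A) ≤ algebraMap ℝ A (r + ε * m) := algebraMap_nonneg A hεm
    _ = algebraMap ℝ A r + ε • algebraMap ℝ A m := by
      rw [map_add, map_mul, Algebra.smul_def]
    _ ≤ a + ε • h := add_le_add hra (smul_le_smul_of_nonneg_left hmh hε.le)

namespace Submodule

variable {E : Type*} [AddCommGroup E] [Module ℂ E] [StarAddMonoid E] [StarModule ℂ E]

noncomputable def selfAdjointPart (W : Submodule ℂ E) : Submodule ℝ E :=
  W.restrictScalars ℝ ⊓ selfAdjoint.submodule ℝ E

theorem finrank_selfAdjointPart (W : Submodule ℂ E) [FiniteDimensional ℂ W]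
    (hW : ∀ x ∈ W, star x ∈ W) :
    Module.finrank ℝ W.selfAdjointPart = Module.finrank ℂ W := by
  set S := W.selfAdjointPart
  let L : S × S →ₗ[ℝ] E := S.subtype.coprod ((Complex.I • LinearMap.id) ∘ₗ S.subtype)
  have hL : ∀ p : S × S, L p = (p.1 : E) + Complex.I • (p.2 : E) := fun _ => rfl
  have hinj : Function.Injective L := by
    rw [← LinearMap.ker_eq_bot, LinearMap.ker_eq_bot']
    rintro ⟨⟨a, ha⟩, ⟨b, hb⟩⟩ hab
    rw [hL] at hab
    obtain rfl : a = 0 := by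
      simpa [ha.2.coe_realPart, hb.2.imaginaryPart] using congrArg (fun x => (ℜ x : E)) hab
    obtain rfl : b = 0 := by
      simpa [ha.2.imaginaryPart, hb.2.coe_realPart] using congrArg (fun x => (ℑ x : E)) hab
    rfl
  have hrange : LinearMap.range L = W.restrictScalars ℝ := by
    apply le_antisymm
    · rintro _ ⟨⟨⟨a, ha, -⟩, ⟨b, hb, -⟩⟩, rfl⟩
      exact W.add_mem ha (W.smul_mem _ hb)
    · intro x hx
      have hre : (ℜ x : E) ∈ S :=
        ⟨by rw [realPart_apply_coe]; exact W.smul_of_tower_mem _ (W.add_mem hx (hW x hx)),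
          (ℜ x).prop⟩
      have him : (ℑ x : E) ∈ S :=
        ⟨by rw [imaginaryPart_apply_coe]
            exact W.smul_mem _ (W.smul_of_tower_mem _ (W.sub_mem hx (hW x hx))),
          (ℑ x).prop⟩
      exact ⟨(⟨_, hre⟩, ⟨_, him⟩), realPart_add_I_smul_imaginaryPart x⟩
  have : Module.Finite ℝ W := Module.Finite.trans ℂ W
  have : Module.Finite ℝ (W.restrictScalars ℝ) := this
  have : Module.Finite ℝ S := finiteDimensional_of_le inf_le_left
  have hdim := LinearMap.finrank_range_of_inj hinj
  rw [hrange, Module.finrank_prod] at hdim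
  have hW₂ : Module.finrank ℝ (W.restrictScalars ℝ) = 2 * Module.finrank ℂ W := by
    rw [← Complex.finrank_real_complex, Module.finrank_mul_finrank]; rfl
  omega

end Submodule

section GramMap

variable {B ι : Type*} [CommRing B] [Algebra ℂ B] [StarRing B] [Fintype ι]

noncomputable def gramMap (u : ι → B) : Matrix ι ι ℂ →ₗ[ℂ] B where
  toFun M := ∑ i, ∑ j, M i j • (u i * star (u j))
  map_add' M N := by simp only [Matrix.add_apply, add_smul, Finset.sum_add_distrib]
  map_smul' c M := by
    simp only [Matrix.smul_apply, smul_eq_mul, mul_smul, Finset.smul_sum, RingHom.id_apply]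

variable (u : ι → B)

theorem gramMap_apply (M : Matrix ι ι ℂ) :
    gramMap u M = ∑ i, ∑ j, M i j • (u i * star (u j)) :=
  rfl

theorem gramMap_conjTranspose [StarModule ℂ B] (M : Matrix ι ι ℂ) :
    gramMap u Mᴴ = star (gramMap u M) := by
  simp only [gramMap_apply, star_sum, star_smul, star_mul', star_star, Matrix.conjTranspose_apply]
  rw [Finset.sum_comm]
  simp only [mul_comm]

theorem star_mem_ker_gramMap [StarModule ℂ B] {M : Matrix ι ι ℂ}
    (hM : M ∈ LinearMap.ker (gramMap u)) : star M ∈ LinearMap.ker (gramMap u) := by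
  rw [LinearMap.mem_ker] at hM ⊢
  rw [Matrix.star_eq_conjTranspose, gramMap_conjTranspose, hM, star_zero]

theorem range_gramMap :
    LinearMap.range (gramMap u) = Submodule.span ℂ {b | ∃ i j, b = u i * star (u j)} := by
  classical
  apply le_antisymm
  · rintro _ ⟨M, rfl⟩
    exact Submodule.sum_mem _ fun i _ => Submodule.sum_mem _ fun j _ =>
      Submodule.smul_mem _ _ (Submodule.subset_span ⟨i, j, rfl⟩)
  · rw [Submodule.span_le]
    rintro _ ⟨i, j, rfl⟩
    refine ⟨Matrix.single i j 1, ?_⟩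
    simp [gramMap_apply, Matrix.single_apply, ite_smul, ite_and]

def gramFace (f : B) : Set (Matrix ι ι ℂ) :=
  {M | M.PosSemidef ∧ gramMap u M = f}

theorem vectorSpan_gramFace [DecidableEq ι] {f : B} {M₀ : Matrix ι ι ℂ} (hM₀ : M₀.PosDef)
    (hM₀f : gramMap u M₀ = f) :
    vectorSpan ℝ (gramFace u f) = (LinearMap.ker (gramMap u)).selfAdjointPart := by
  apply le_antisymm
  · rw [vectorSpan_def, Submodule.span_le]
    rintro _ ⟨M, ⟨hM, hMf⟩, N, ⟨hN, hNf⟩, rfl⟩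
    refine ⟨?_, hM.isHermitian.sub hN.isHermitian⟩
    show gramMap u (M - N) = 0
    rw [map_sub, hMf, hNf, sub_self]
  · rintro H ⟨hH, hHsa⟩
    obtain ⟨ε, hε, hpos⟩ :=
      (Matrix.isStrictlyPositive_iff_posDef.mpr hM₀).exists_pos_nonneg_add_smul hHsa
    have hface : M₀ + ε • H ∈ gramFace u f := by
      refine ⟨Matrix.nonneg_iff_posSemidef.mp hpos, ?_⟩
      rw [map_add, LinearMap.map_smul_of_tower, LinearMap.mem_ker.mp hH, smul_zero, add_zero, hM₀f]
    have hεH : ε • H ∈ vectorSpan ℝ (gramFace u f) := by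
      simpa using vsub_mem_vectorSpan ℝ hface ⟨hM₀.posSemidef, hM₀f⟩
    exact (Submodule.smul_mem_iff _ hε.ne').mp hεH

end GramMap

theorem herm_face_dim_eq_general
    {B : Type*} [CommRing B] [Algebra ℂ B] [StarRing B] [StarModule ℂ B]
    (f : B) (r : ℕ) (u : Fin r → B)
    (hface : ∃ M : Matrix (Fin r) (Fin r) ℂ, M.PosSemidef ∧
        (∑ i, ∑ j, M i j • (u i * star (u j))) = f ∧ M.rank = r) :
    Module.finrank ℝ (vectorSpan ℝ
        {M : Matrix (Fin r) (Fin r) ℂ | M.PosSemidef ∧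
          (∑ i, ∑ j, M i j • (u i * star (u j))) = f}) =
      r ^ 2 - Module.finrank ℂ
        (Submodule.span ℂ {b : B | ∃ i j, b = u i * star (u j)}) := by
  obtain ⟨M₀, hM₀, hM₀f, hrank⟩ := hface
  have hM₀pd : M₀.PosDef := hM₀.posDef_of_rank_eq_card (by rw [hrank, Fintype.card_fin])
  have hdim := (gramMap u).finrank_range_add_finrank_ker
  rw [Module.finrank_matrix, Module.finrank_self, mul_one, Fintype.card_fin] at hdim
  change Module.finrank ℝ (vectorSpan ℝ (gramFace u f)) = _
  rw [vectorSpan_gramFace u hM₀pd hM₀f,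
    Submodule.finrank_selfAdjointPart _ fun _ => star_mem_ker_gramMap u, ← range_gramMap, sq]
  omega

/-- Let `U` be a face subspace (with basis `u 0, …, u (r-1)`) for the Hermitian
Gram spectrahedron `H⁺(f)` of `f`, i.e. there is a psd Hermitian Gram matrix of `f` in the
coordinates `u` of full rank `r`.  Then the corresponding face `F(U)` — the set of all psd
Hermitian Gram matrices of `f` in the coordinates `u` — has real dimension
`dim_ℂ(U)² − dim_ℂ(U·conj(U))`.  Here `B` is the complexification of an ℝ-algebra, with
`star` the induced (conjugate-linear) involution, and `U·conj(U)` is the ℂ-span of the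
products `u i * star (u j)`. -/
theorem herm_face_dim_eq
    {B : Type*} [CommRing B] [Algebra ℂ B] [StarRing B] [StarModule ℂ B]
    (f : B) (r : ℕ) (u : Fin r → B) (hu : LinearIndependent ℂ u)
    (hface : ∃ M : Matrix (Fin r) (Fin r) ℂ, M.PosSemidef ∧
        (∑ i, ∑ j, M i j • (u i * star (u j))) = f ∧ M.rank = r) :
    Module.finrank ℝ (vectorSpan ℝ
        {M : Matrix (Fin r) (Fin r) ℂ | M.PosSemidef ∧
          (∑ i, ∑ j, M i j • (u i * star (u j))) = f}) =
      r ^ 2 - Module.finrank ℂ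
        (Submodule.span ℂ {b : B | ∃ i j, b = u i * star (u j)}) :=
  herm_face_dim_eq_general f r u hface
end

section
/- Let f ∈ ℝ[x,y]_{2d} be a positive binary form with distinct roots. For each 2 ≤ s ≤ 2^d there exist s rank-one tensors in H⁺(f) whose sum has rank at most ⌈log₂(s)⌉ + 1. -/
open MvPolynomial

/-- Coefficientwise complex conjugation of a complex binary form. -/
noncomputable def conjP (p : MvPolynomial (Fin 2) ℂ) : MvPolynomial (Fin 2) ℂ :=
  MvPolynomial.map (starRingEnd ℂ) p

/-!
Over `ℂ` the form factors as `f = c ∏_{a ∈ U} (x - a y)(x - ā y)` with `c > 0` and `U` the `d`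
roots in the upper half plane: positivity rules out real roots and squarefreeness repeated ones.
Choosing one of `a`, `ā` for every `a ∈ U` gives a form `p` with `p · conj p = f`, and different
choices give non-proportional forms because their zero sets differ. Letting the choice vary only
on a set `S ⊆ U` of `⌈log₂ s⌉` roots gives `2^|S| ≥ s` such forms, all of the shape `q · h` with
`q` fixed and `h` a binary form of degree `|S|`; these span a space of dimension at most `|S| + 1`.
-/

namespace MvPolynomial

section CommRing

variable {R : Type*} [CommRing R]

noncomputable def linearFactor (a : R) : MvPolynomial (Fin 2) R := X 0 - C a * X 1

noncomputable abbrev dehomogenize (p : MvPolynomial (Fin 2) R) : Polynomial R :=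
  aeval ![Polynomial.X, 1] p

theorem isHomogeneous_linearFactor (a : R) : (linearFactor a).IsHomogeneous 1 :=
  (isHomogeneous_X R 0).sub (isHomogeneous_C_mul_X a 1)

theorem isHomogeneous_multiset_prod_linearFactor (s : Multiset R) :
    (s.map linearFactor).prod.IsHomogeneous (Multiset.card s) := by
  induction s using Multiset.induction_on with
  | empty => simpa using isHomogeneous_one (Fin 2) R
  | cons a s ih =>
    simpa [add_comm] using (isHomogeneous_linearFactor a).mul ih

theorem map_linearFactor {S : Type*} [CommRing S] (φ : R →+* S) (a : R) :
    map φ (linearFactor a) = linearFactor (φ a) := by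
  simp [linearFactor]

theorem isHomogeneous_prod_linearFactor {ι : Type*} (s : Finset ι) (a : ι → R) :
    (∏ i ∈ s, linearFactor (a i)).IsHomogeneous s.card := by
  simpa using IsHomogeneous.prod s _ (fun _ => 1) fun i _ => isHomogeneous_linearFactor (a i)

@[simp]
theorem eval_linearFactor (a : R) (v : Fin 2 → R) :
    eval v (linearFactor a) = v 0 - a * v 1 := by
  simp [linearFactor]

@[simp]
theorem dehomogenize_linearFactor (a : R) :
    dehomogenize (linearFactor a) = Polynomial.X - Polynomial.C a := by
  simp [linearFactor, Polynomial.C_eq_algebraMap]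

theorem IsHomogeneous.natDegree_dehomogenize_le {p : MvPolynomial (Fin 2) R} {n : ℕ}
    (hp : p.IsHomogeneous n) : (dehomogenize p).natDegree ≤ n := by
  simpa using aeval_natDegree_le p hp.totalDegree_le ![Polynomial.X, 1]
    (n := 1) (by intro i; fin_cases i <;> simp [Polynomial.natDegree_X_le])

theorem IsHomogeneous.eq_of_dehomogenize_eq {p q : MvPolynomial (Fin 2) R} {n : ℕ}
    (hp : p.IsHomogeneous n) (hq : q.IsHomogeneous n)
    (h : dehomogenize p = dehomogenize q) : p = q := by
  calc p = (dehomogenize p).homogenize n := (Polynomial.homogenize_eq_of_isHomogeneous hp rfl).symm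
    _ = (dehomogenize q).homogenize n := by rw [h]
    _ = q := Polynomial.homogenize_eq_of_isHomogeneous hq rfl

end CommRing

section Field

variable {K : Type*} [Field K]

theorem IsHomogeneous.exists_eq_C_mul_X_pow_mul_prod_linearFactor [IsAlgClosed K]
    {p : MvPolynomial (Fin 2) K} {n : ℕ} (hp : p.IsHomogeneous n) :
    ∃ (c : K) (k : ℕ) (s : Multiset K), k + Multiset.card s = n ∧
      p = C c * X 1 ^ k * (s.map linearFactor).prod := by
  set F := dehomogenize p
  have hF : Polynomial.C F.leadingCoeff *
      (F.roots.map fun a => Polynomial.X - Polynomial.C a).prod = F :=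
    Polynomial.C_leadingCoeff_mul_prod_multiset_X_sub_C IsAlgClosed.card_roots_eq_natDegree
  have hcard : Multiset.card F.roots ≤ n :=
    IsAlgClosed.card_roots_eq_natDegree (k := K) ▸ hp.natDegree_dehomogenize_le
  refine ⟨F.leadingCoeff, n - Multiset.card F.roots, F.roots, by omega,
    hp.eq_of_dehomogenize_eq ?_ ?_⟩
  · convert ((isHomogeneous_C _ _).mul (isHomogeneous_X_pow 1 _)).mul
      (isHomogeneous_multiset_prod_linearFactor F.roots) using 1
    omega
  · simp [F, map_multiset_prod, Multiset.map_map, hF]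

theorem eval_C_mul_prod_linearFactor_eq_zero_iff {c : K} (hc : c ≠ 0)
    (s : Multiset K) (z : K) :
    eval ![z, 1] (C c * (s.map linearFactor).prod) = 0 ↔ z ∈ s := by
  simp [map_multiset_prod, Multiset.map_map, Multiset.prod_eq_zero_iff, hc, sub_eq_zero]

theorem finrank_span_le_of_forall_eq_mul_isHomogeneous {q : MvPolynomial (Fin 2) K} {n : ℕ}
    {P : Set (MvPolynomial (Fin 2) K)}
    (hP : ∀ p ∈ P, ∃ h : MvPolynomial (Fin 2) K, h.IsHomogeneous n ∧ p = q * h) :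
    Module.finrank K (Submodule.span K P) ≤ n + 1 := by
  have : Module.Finite K (Polynomial.degreeLT K (n + 1)) :=
    .of_basis (Polynomial.degreeLT.basis K (n + 1))
  have hle : Submodule.span K P ≤ (Polynomial.degreeLT K (n + 1)).map
      ((LinearMap.mulLeft K q).comp (Polynomial.homogenizeLM n)) := by
    refine Submodule.span_le.mpr fun p hp => ?_
    obtain ⟨h, hh, rfl⟩ := hP p hp
    refine ⟨dehomogenize h, ?_, ?_⟩
    · exact Polynomial.mem_degreeLT.mpr <| Polynomial.degree_le_natDegree.trans_lt
        (by exact_mod_cast Nat.lt_succ_of_le hh.natDegree_dehomogenize_le)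
    · simp [Polynomial.homogenize_eq_of_isHomogeneous hh rfl]
  calc Module.finrank K (Submodule.span K P)
      ≤ Module.finrank K (Polynomial.degreeLT K (n + 1)) :=
        (Submodule.finrank_mono hle).trans (Submodule.finrank_map_le _ _)
    _ = n + 1 := by simp [Module.finrank_eq_card_basis (Polynomial.degreeLT.basis K (n + 1))]

end Field

section RealForms

open ComplexConjugate

variable {σ : Type*}

theorem eval_ofReal_map_algebraMap (f : MvPolynomial σ ℝ) (v : σ → ℝ) :
    eval (fun i => (v i : ℂ)) (map (algebraMap ℝ ℂ) f) = eval v f := by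
  rw [eval_map]
  exact (eval₂_comp_left (algebraMap ℝ ℂ) (RingHom.id ℝ) v f).symm

theorem eval_conj_map_algebraMap (f : MvPolynomial σ ℝ) (v : σ → ℂ) :
    eval (fun i => conj (v i)) (map (algebraMap ℝ ℂ) f) =
      conj (eval v (map (algebraMap ℝ ℂ) f)) := by
  rw [eval_map, eval_map, eval₂_comp_left]
  congr 1
  ext r
  simp

theorem exists_map_eq_C_mul_prod_linearFactor_of_pos {n : ℕ} {f : MvPolynomial (Fin 2) ℝ}
    (hf : f.IsHomogeneous n) (hpos : ∀ v : Fin 2 → ℝ, v ≠ 0 → 0 < eval v f) :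
    ∃ s : Multiset ℂ, Multiset.card s = n ∧
      map (algebraMap ℝ ℂ) f = C ((eval ![(1 : ℝ), 0] f : ℝ) : ℂ) * (s.map linearFactor).prod := by
  obtain ⟨c, k, s, hks, hfac⟩ :=
    (hf.map (algebraMap ℝ ℂ)).exists_eq_C_mul_X_pow_mul_prod_linearFactor
  have hne : eval ![(1 : ℝ), 0] f ≠ 0 := (hpos _ (by simp)).ne'
  have h10 : c * 0 ^ k = (eval ![(1 : ℝ), 0] f : ℂ) := by
    simpa [hfac, map_multiset_prod, Multiset.map_map] using eval_ofReal_map_algebraMap f ![1, 0]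
  obtain rfl : k = 0 := by
    by_contra hk
    rw [zero_pow hk, mul_zero, eq_comm, Complex.ofReal_eq_zero] at h10
    exact hne h10
  refine ⟨s, by omega, ?_⟩
  simpa [← h10] using hfac

end RealForms

end MvPolynomial

open MvPolynomial ComplexConjugate

theorem Multiset.nodup_of_squarefree_C_mul_prod_linearFactor {K : Type*} [Field K] {c : K}
    {s : Multiset K} (h : Squarefree (C c * (s.map linearFactor).prod)) : s.Nodup := by
  rw [Multiset.nodup_iff_ne_cons_cons]
  rintro a t rfl
  have hunit : IsUnit (linearFactor a) :=
    h _ ⟨C c * (t.map linearFactor).prod, by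
      simp only [Multiset.map_cons, Multiset.prod_cons]; ring⟩
  simpa using hunit.map (eval ![a, 1])

theorem Finset.filter_not_im_pos_eq_image_conj {R : Finset ℂ} (hconj : ∀ z ∈ R, conj z ∈ R)
    (hreal : ∀ z ∈ R, z.im ≠ 0) :
    R.filter (fun z => ¬ 0 < z.im) = (R.filter (fun z => 0 < z.im)).image conj := by
  ext z
  simp only [Finset.mem_filter, Finset.mem_image]
  constructor
  · rintro ⟨hz, him⟩
    refine ⟨conj z, ⟨hconj z hz, ?_⟩, Complex.conj_conj z⟩
    rw [Complex.conj_im, neg_pos]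
    exact (not_lt.mp him).lt_of_ne (hreal z hz)
  · rintro ⟨w, ⟨hw, him⟩, rfl⟩
    exact ⟨hconj w hw, by simp [him.le]⟩

theorem exists_map_eq_C_mul_prod_linearFactor_mul_conj {d : ℕ} {f : MvPolynomial (Fin 2) ℝ}
    (hf : f.IsHomogeneous (2 * d)) (hpos : ∀ v : Fin 2 → ℝ, v ≠ 0 → 0 < eval v f)
    (hsqfree : Squarefree (map (algebraMap ℝ ℂ) f)) :
    ∃ (c : ℝ) (U : Finset ℂ), 0 < c ∧ U.card = d ∧ (∀ a ∈ U, 0 < a.im) ∧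
      map (algebraMap ℝ ℂ) f = C (c : ℂ) * ∏ a ∈ U, linearFactor a * linearFactor (conj a) := by
  obtain ⟨s, hcard, hfac⟩ := exists_map_eq_C_mul_prod_linearFactor_of_pos hf hpos
  set c := eval ![(1 : ℝ), 0] f
  have hc : 0 < c := hpos _ (by simp)
  have hnodup : s.Nodup := Multiset.nodup_of_squarefree_C_mul_prod_linearFactor (hfac ▸ hsqfree)
  have hmem : ∀ z, z ∈ s.toFinset ↔ eval ![z, 1] (map (algebraMap ℝ ℂ) f) = 0 := fun z => by
    rw [hfac, eval_C_mul_prod_linearFactor_eq_zero_iff (by exact_mod_cast hc.ne'),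
      Multiset.mem_toFinset]
  have hconj : ∀ z ∈ s.toFinset, conj z ∈ s.toFinset := by
    intro z hz
    rw [hmem] at hz ⊢
    have h := eval_conj_map_algebraMap f ![z, 1]
    rw [hz, map_zero] at h
    convert h using 3
    ext i; fin_cases i <;> simp
  have hreal : ∀ z ∈ s.toFinset, z.im ≠ 0 := by
    intro z hz him
    rw [hmem] at hz
    have hz' : ![z, 1] = fun i => ((![z.re, 1] i : ℝ) : ℂ) := by
      ext i; fin_cases i <;> simp [Complex.ext_iff, him]
    rw [hz', eval_ofReal_map_algebraMap, Complex.ofReal_eq_zero] at hz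
    exact (hpos _ (by simp)).ne' hz
  have hsplit := Finset.filter_not_im_pos_eq_image_conj hconj hreal
  refine ⟨c, s.toFinset.filter (0 < ·.im), hc, ?_, fun a ha => (Finset.mem_filter.mp ha).2, ?_⟩
  · have := s.toFinset.card_filter_add_card_filter_not (0 < ·.im)
    rw [hsplit, Finset.card_image_of_injective _ (RingHom.injective _),
      Multiset.toFinset_card_of_nodup hnodup, hcard] at this
    omega
  · have hprod : (s.map linearFactor).prod = ∏ a ∈ s.toFinset, linearFactor a := by
      rw [Finset.prod_eq_multiset_prod, Multiset.toFinset_val, hnodup.dedup]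
    rw [hfac, hprod, ← Finset.prod_filter_mul_prod_filter_not s.toFinset (0 < ·.im), hsplit,
      Finset.prod_image (RingHom.injective _).injOn, Finset.prod_mul_distrib]

noncomputable def selectedRootsForm (e : ℂ) (U T : Finset ℂ) : MvPolynomial (Fin 2) ℂ :=
  C e * ∏ a ∈ U, linearFactor (if a ∈ T then a else conj a)

section SelectedRootsForm

variable (e : ℂ) (U T : Finset ℂ)

theorem isHomogeneous_selectedRootsForm : (selectedRootsForm e U T).IsHomogeneous U.card := by
  simpa [selectedRootsForm] using (isHomogeneous_C (Fin 2) e).mul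
    (isHomogeneous_prod_linearFactor U _)

theorem selectedRootsForm_mul_conjP :
    selectedRootsForm e U T * conjP (selectedRootsForm e U T) =
      C (Complex.normSq e : ℂ) * ∏ a ∈ U, linearFactor a * linearFactor (conj a) := by
  have hpair : ∀ a ∈ U, linearFactor (if a ∈ T then a else conj a) *
      linearFactor (conj (if a ∈ T then a else conj a)) =
        linearFactor a * linearFactor (conj a) := by
    intro a _
    split_ifs
    · rfl
    · rw [Complex.conj_conj, mul_comm]
  simp only [selectedRootsForm, conjP, map_mul, map_C, map_prod, map_linearFactor]
  rw [← Finset.prod_congr rfl hpair, Finset.prod_mul_distrib, ← Complex.mul_conj, C_mul]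
  ring

variable {e U T}

theorem eval_selectedRootsForm_eq_zero_iff (he : e ≠ 0) (z : ℂ) :
    eval ![z, 1] (selectedRootsForm e U T) = 0 ↔ ∃ a ∈ U, (if a ∈ T then a else conj a) = z := by
  simp [selectedRootsForm, he, Finset.prod_eq_zero_iff, sub_eq_zero, eq_comm (a := z)]

theorem eval_selectedRootsForm_eq_zero_iff_mem (he : e ≠ 0) (hU : ∀ a ∈ U, 0 < a.im) {a : ℂ}
    (ha : a ∈ U) : eval ![a, 1] (selectedRootsForm e U T) = 0 ↔ a ∈ T := by
  rw [eval_selectedRootsForm_eq_zero_iff he]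
  refine ⟨fun ⟨b, hb, hba⟩ => ?_, fun haT => ⟨a, ha, if_pos haT⟩⟩
  split_ifs at hba with hbT
  · exact hba ▸ hbT
  · have := congrArg Complex.im hba
    linarith [Complex.conj_im b, hU a ha, hU b hb]

theorem eval_conj_selectedRootsForm_eq_zero_iff_notMem (he : e ≠ 0) (hU : ∀ a ∈ U, 0 < a.im)
    {a : ℂ} (ha : a ∈ U) : eval ![conj a, 1] (selectedRootsForm e U T) = 0 ↔ a ∉ T := by
  rw [eval_selectedRootsForm_eq_zero_iff he]
  refine ⟨fun ⟨b, hb, hba⟩ => ?_, fun haT => ⟨a, ha, if_neg haT⟩⟩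
  split_ifs at hba with hbT
  · have := congrArg Complex.im hba
    linarith [Complex.conj_im a, hU a ha, hU b hb]
  · exact (RingHom.injective _ hba) ▸ hbT

theorem selectedRootsForm_ne_smul (he : e ≠ 0) (hU : ∀ a ∈ U, 0 < a.im) {T' : Finset ℂ}
    (hT : T ⊆ U) (hT' : T' ⊆ U) (hne : T ≠ T') (c : ℂ) :
    selectedRootsForm e U T ≠ c • selectedRootsForm e U T' := by
  intro h
  obtain ⟨z, hzT, hzT'⟩ : ∃ z, eval ![z, 1] (selectedRootsForm e U T) ≠ 0 ∧
      eval ![z, 1] (selectedRootsForm e U T') = 0 := by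
    by_cases hsub : T ⊆ T'
    · obtain ⟨a, haT', haT⟩ := Finset.not_subset.mp fun h' => hne (hsub.antisymm h')
      exact ⟨a, (eval_selectedRootsForm_eq_zero_iff_mem he hU (hT' haT')).not.mpr haT,
        (eval_selectedRootsForm_eq_zero_iff_mem he hU (hT' haT')).mpr haT'⟩
    · obtain ⟨a, haT, haT'⟩ := Finset.not_subset.mp hsub
      exact ⟨conj a, (eval_conj_selectedRootsForm_eq_zero_iff_notMem he hU (hT haT)).not.mpr
        (not_not.mpr haT), (eval_conj_selectedRootsForm_eq_zero_iff_notMem he hU (hT haT)).mpr haT'⟩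
  rw [h, smul_eq_C_mul, map_mul, hzT', mul_zero] at hzT
  exact hzT rfl

theorem selectedRootsForm_eq_mul_prod {S : Finset ℂ} (hTS : T ⊆ S) (hSU : S ⊆ U) :
    selectedRootsForm e U T = (C e * ∏ a ∈ U \ S, linearFactor (conj a)) *
      ∏ a ∈ S, linearFactor (if a ∈ T then a else conj a) := by
  rw [selectedRootsForm, ← Finset.prod_sdiff hSU, mul_assoc]
  congr 2
  refine Finset.prod_congr rfl fun a ha => ?_
  rw [if_neg fun haT => (Finset.mem_sdiff.mp ha).2 (hTS haT)]

end SelectedRootsForm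

theorem exists_rank_one_tensors_small_rank_sum_general
    (d s : ℕ) (f : MvPolynomial (Fin 2) ℝ)
    (hf : f.IsHomogeneous (2 * d))
    (hpos : ∀ v : Fin 2 → ℝ, v ≠ 0 → 0 < MvPolynomial.eval v f)
    (hsqfree : Squarefree (MvPolynomial.map (algebraMap ℝ ℂ) f))
    (hs : s ≤ 2 ^ d) :
    ∃ p : Fin s → MvPolynomial (Fin 2) ℂ,
      (∀ k, (p k).IsHomogeneous d) ∧
      (∀ k, p k * conjP (p k) = MvPolynomial.map (algebraMap ℝ ℂ) f) ∧
      (∀ k l, k ≠ l → ∀ c : ℂ, p k ≠ c • p l) ∧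
      Module.finrank ℂ (Submodule.span ℂ (Set.range p)) ≤ Nat.clog 2 s + 1 := by
  obtain ⟨c, U, hc, hUcard, hUim, hfac⟩ :=
    exists_map_eq_C_mul_prod_linearFactor_mul_conj hf hpos hsqfree
  obtain ⟨S, hSU, hScard⟩ : ∃ S ⊆ U, S.card = Nat.clog 2 s :=
    Finset.exists_subset_card_eq (hUcard ▸ (Nat.clog_le_iff_le_pow one_lt_two).mpr hs)
  obtain ⟨σ⟩ : Nonempty (Fin s ↪ S.powerset) := by
    rw [Function.Embedding.nonempty_iff_card_le]
    simpa [hScard] using Nat.le_pow_clog one_lt_two s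
  have hσS (k : Fin s) : (σ k : Finset ℂ) ⊆ S := Finset.mem_powerset.mp (σ k).2
  have he : (Real.sqrt c : ℂ) ≠ 0 := Complex.ofReal_ne_zero.mpr (Real.sqrt_pos.mpr hc).ne'
  refine ⟨fun k => selectedRootsForm (Real.sqrt c) U (σ k),
    fun k => hUcard ▸ isHomogeneous_selectedRootsForm _ _ _, fun k => ?_, fun k l hkl =>
      selectedRootsForm_ne_smul he hUim ((hσS k).trans hSU) ((hσS l).trans hSU)
        (Subtype.val_injective.ne (σ.injective.ne hkl)), ?_⟩
  · rw [selectedRootsForm_mul_conjP, hfac, Complex.normSq_ofReal, Real.mul_self_sqrt hc.le]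
  · rw [← hScard]
    apply finrank_span_le_of_forall_eq_mul_isHomogeneous
    rintro _ ⟨k, rfl⟩
    exact ⟨_, isHomogeneous_prod_linearFactor _ _, selectedRootsForm_eq_mul_prod (hσS k) hSU⟩

/-- Let `f ∈ ℝ[x,y]_{2d}` be a positive binary form with distinct roots.  For
each `2 ≤ s ≤ 2^d` there exist `s` (pairwise distinct, i.e. pairwise non-proportional)
rank-one tensors `p k ⊗ conj (p k)` in `H⁺(f)` whose sum has rank
`dim_ℂ span(p 1, …, p s) ≤ ⌈log₂ s⌉ + 1`. -/
theorem exists_rank_one_tensors_small_rank_sum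
    (d s : ℕ) (f : MvPolynomial (Fin 2) ℝ)
    (hf : f.IsHomogeneous (2 * d))
    (hpos : ∀ v : Fin 2 → ℝ, v ≠ 0 → 0 < MvPolynomial.eval v f)
    (hsqfree : Squarefree (MvPolynomial.map (algebraMap ℝ ℂ) f))
    (hs2 : 2 ≤ s) (hs : s ≤ 2 ^ d) :
    ∃ p : Fin s → MvPolynomial (Fin 2) ℂ,
      (∀ k, (p k).IsHomogeneous d) ∧
      (∀ k, p k * conjP (p k) = MvPolynomial.map (algebraMap ℝ ℂ) f) ∧
      (∀ k l, k ≠ l → ∀ c : ℂ, p k ≠ c • p l) ∧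
      Module.finrank ℂ (Submodule.span ℂ (Set.range p)) ≤ Nat.clog 2 s + 1 :=
  exists_rank_one_tensors_small_rank_sum_general d s f hf hpos hsqfree hs
end

section
/- Let U ⊆ ℂ[x]_{≤d} be a k-dimensional subspace with k ≤ d. Then there exist scalars λ₁, …, λ_k ∈ ℂ and a basis p₁, …, p_k of U such that p_l(λ_l) ≠ 0 and p_j(λ_l) = 0 for all j > l. In particular, the only element of U vanishing at all of λ₁, …, λ_k is 0. -/
/-!
Pick a nonzero `q₀ ∈ U` and a point `λ₀` with `q₀(λ₀) ≠ 0` (a nonzero polynomial over an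
infinite field is not the zero function). The polynomials of `U` vanishing at `λ₀` form a
hyperplane of `U`; a triangular basis of it, preceded by `q₀` and `λ₀`, is one of `U`.
The argument only uses that point evaluations separate the elements of `U`, and works for any
separating family of linear functionals.
-/

open Module Polynomial

namespace Submodule

variable {K M ι : Type*} [Field K] [AddCommGroup M] [Module K M]

theorem finrank_inf_ker_add_one {U : Submodule K M} [FiniteDimensional K U] {φ : Dual K M}
    {v : M} (hvU : v ∈ U) (hφv : φ v ≠ 0) :
    finrank K ↥(U ⊓ LinearMap.ker φ) + 1 = finrank K U := by
  have hne : φ ∘ₗ U.subtype ≠ 0 := fun h ↦ hφv (LinearMap.congr_fun h ⟨v, hvU⟩)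
  rw [← Dual.finrank_ker_add_one_of_ne_zero hne, LinearMap.ker_comp, ← map_comap_subtype,
    finrank_map_subtype_eq]

theorem exists_triangular_basis_of_separating (f : ι → Dual K M) (U : Submodule K M)
    [FiniteDimensional K U] (hsep : ∀ v ∈ U, v ≠ 0 → ∃ i, f i v ≠ 0) {k : ℕ}
    (hdim : finrank K U = k) :
    ∃ (a : Fin k → ι) (p : Fin k → M),
      (∀ i, p i ∈ U) ∧
      LinearIndependent K p ∧
      span K (Set.range p) = U ∧
      (∀ l, f (a l) (p l) ≠ 0) ∧
      (∀ l j, l < j → f (a l) (p j) = 0) ∧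
      (∀ q ∈ U, (∀ l, f (a l) q = 0) → q = 0) := by
  induction k generalizing U with
  | zero =>
    obtain rfl : U = ⊥ := finrank_eq_zero.mp hdim
    refine ⟨Fin.elim0, Fin.elim0, fun i ↦ i.elim0, linearIndependent_empty_type, ?_,
      fun l ↦ l.elim0, fun l ↦ l.elim0, fun q hq _ ↦ (mem_bot K).mp hq⟩
    simp [Set.range_eq_empty]
  | succ k ih =>
    obtain ⟨q₀, hq₀U, hq₀⟩ := exists_mem_ne_zero_of_ne_bot (p := U) (by rintro rfl; simp at hdim)
    obtain ⟨i₀, hi₀⟩ := hsep q₀ hq₀U hq₀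
    have hdim' : finrank K ↥(U ⊓ LinearMap.ker (f i₀)) = k := by
      have := finrank_inf_ker_add_one hq₀U hi₀
      omega
    obtain ⟨a, p, hpU', hli, hspan, hdiag, htri, hvanish⟩ :=
      ih _ (fun v hv ↦ hsep v (mem_inf.mp hv).1) hdim'
    have hpU : ∀ j, p j ∈ U := fun j ↦ (mem_inf.mp (hpU' j)).1
    have hp₀ : ∀ j, f i₀ (p j) = 0 := fun j ↦ (mem_inf.mp (hpU' j)).2
    have hmem : ∀ j, (Fin.cons q₀ p : Fin (k + 1) → M) j ∈ U := Fin.cases hq₀U hpU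
    have hli' : LinearIndependent K (Fin.cons q₀ p : Fin (k + 1) → M) :=
      linearIndependent_finCons.mpr ⟨hli, fun h ↦ hi₀ (mem_inf.mp (hspan ▸ h)).2⟩
    refine ⟨Fin.cons i₀ a, Fin.cons q₀ p, hmem, hli', ?_, Fin.cases hi₀ hdiag, ?_, ?_⟩
    · refine eq_of_le_of_finrank_le (span_le.mpr (Set.range_subset_iff.mpr hmem)) ?_
      rw [hdim, finrank_span_eq_card hli', Fintype.card_fin]
    · intro l j hlj
      induction j using Fin.cases with
      | zero => exact absurd hlj (Fin.not_lt_zero l)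
      | succ j =>
        induction l using Fin.cases with
        | zero => exact hp₀ j
        | succ l => exact htri l j (Fin.succ_lt_succ_iff.mp hlj)
    · intro q hqU hq
      exact hvanish q (mem_inf.mpr ⟨hqU, hq 0⟩) fun l ↦ hq l.succ

end Submodule

namespace Polynomial

instance finite_degreeLE {R : Type*} [Semiring R] (n : ℕ) : Module.Finite R (degreeLE R n) := by
  rw [← degreeLT_succ_eq_degreeLE]
  exact .equiv (degreeLTEquiv R (n + 1)).symm

theorem exists_eval_ne_zero {R : Type*} [CommRing R] [IsDomain R] [Infinite R] {q : R[X]}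
    (hq : q ≠ 0) : ∃ x, q.eval x ≠ 0 :=
  not_forall.mp fun h ↦ hq (Polynomial.funext (by simpa using h))

end Polynomial

theorem exists_triangular_basis_general
    (d k : ℕ) (U : Submodule ℂ (Polynomial ℂ))
    (hUle : U ≤ Polynomial.degreeLE ℂ (d : ℕ))
    (hdim : Module.finrank ℂ U = k) :
    ∃ (lam : Fin k → ℂ) (p : Fin k → Polynomial ℂ),
      (∀ i, p i ∈ U) ∧
      LinearIndependent ℂ p ∧
      Submodule.span ℂ (Set.range p) = U ∧
      (∀ l, Polynomial.eval (lam l) (p l) ≠ 0) ∧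
      (∀ l j, l < j → Polynomial.eval (lam l) (p j) = 0) ∧
      (∀ q ∈ U, (∀ l, Polynomial.eval (lam l) q = 0) → q = 0) := by
  have : FiniteDimensional ℂ U := Submodule.finiteDimensional_of_le hUle
  exact U.exists_triangular_basis_of_separating leval
    (fun _ _ ↦ exists_eval_ne_zero) hdim

/-- Let `U ⊆ ℂ[x]_{≤ d}` be a `k`-dimensional subspace, `k ≤ d`.  Then there
exist scalars `λ 0, …, λ (k-1) ∈ ℂ` and a basis `p 0, …, p (k-1)` of `U` such that
`p l (λ l) ≠ 0` and `p j (λ l) = 0` for all `j > l`.  In particular, the only element of `U`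
vanishing at all of the `λ l` is `0`. -/
theorem exists_triangular_basis
    (d k : ℕ) (hk : k ≤ d) (U : Submodule ℂ (Polynomial ℂ))
    (hUle : U ≤ Polynomial.degreeLE ℂ (d : ℕ))
    (hdim : Module.finrank ℂ U = k) :
    ∃ (lam : Fin k → ℂ) (p : Fin k → Polynomial ℂ),
      (∀ i, p i ∈ U) ∧
      LinearIndependent ℂ p ∧
      Submodule.span ℂ (Set.range p) = U ∧
      (∀ l, Polynomial.eval (lam l) (p l) ≠ 0) ∧
      (∀ l j, l < j → Polynomial.eval (lam l) (p j) = 0) ∧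
      (∀ q ∈ U, (∀ l, Polynomial.eval (lam l) q = 0) → q = 0) :=
  exists_triangular_basis_general d k U hUle hdim
end

section
/- Let U ⊆ ℂ[x]_{≤d} be a k-dimensional subspace with k ≤ d. Then there exist λ₁, …, λ_k ∈ ℂ such that: whenever p ∈ U vanishes at all λ_j, or p vanishes at all conjugates conj(λ_j), then p = 0. -/
/-! Inductively, given a nonzero `p ∈ U`, pick a real point `x` with `p(x) ≠ 0` (a nonzero
polynomial has finitely many roots): evaluation at `x` is then a nonzero functional on `U`, whose
kernel has dimension one less and gets the remaining points. Since all points are real, they are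
their own conjugates. -/

open Module Polynomial

theorem Module.Dual.exists_fin_finrank_separating {K V S : Type*} [Field K] [AddCommGroup V]
    [Module K V] [FiniteDimensional K V] (φ : S → Dual K V)
    (hφ : ∀ v, (∀ s, φ s v = 0) → v = 0) :
    ∃ lam : Fin (finrank K V) → S, ∀ v, (∀ j, φ (lam j) v = 0) → v = 0 := by
  induction hk : finrank K V generalizing V with
  | zero =>
    have : Subsingleton V := finrank_zero_iff.mp hk
    exact ⟨Fin.elim0, fun v _ => Subsingleton.elim v 0⟩
  | succ k ih =>
    have : Nontrivial V := finrank_pos_iff (R := K).mp (by omega)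
    obtain ⟨v₀, hv₀⟩ := exists_ne (0 : V)
    obtain ⟨s, hs⟩ : ∃ s, φ s v₀ ≠ 0 := by
      by_contra! h
      exact hv₀ (hφ v₀ h)
    have hφs : φ s ≠ 0 := fun h => hs (by simp [h])
    have hker : finrank K (LinearMap.ker (φ s)) = k := by
      have := finrank_ker_add_one_of_ne_zero hφs
      omega
    obtain ⟨lam, hlam⟩ := ih (fun t => (φ t).comp (LinearMap.ker (φ s)).subtype)
      (fun w hw => Subtype.ext (hφ w hw)) hker
    refine ⟨Fin.cons s lam, fun v hv => ?_⟩
    have hvs : v ∈ LinearMap.ker (φ s) := by simpa using hv 0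
    simpa using hlam ⟨v, hvs⟩ (fun j => by simpa using hv j.succ)

theorem Polynomial.eq_zero_of_forall_eval_ofReal_eq_zero {p : ℂ[X]}
    (hp : ∀ x : ℝ, p.eval (x : ℂ) = 0) : p = 0 :=
  p.eq_zero_of_infinite_isRoot <| (Set.infinite_range_of_injective Complex.ofReal_injective).mono
    (by rintro _ ⟨x, rfl⟩; exact hp x)

theorem exists_scalars_detecting_zero_with_conjugates_general
    (d k : ℕ) (U : Submodule ℂ (Polynomial ℂ))
    (hUle : U ≤ Polynomial.degreeLE ℂ (d : ℕ))
    (hdim : Module.finrank ℂ U = k) :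
    ∃ lam : Fin k → ℂ, ∀ p ∈ U,
      ((∀ j, Polynomial.eval (lam j) p = 0) ∨
       (∀ j, Polynomial.eval (starRingEnd ℂ (lam j)) p = 0)) → p = 0 := by
  have : FiniteDimensional ℂ (degreeLE ℂ d) := by
    rw [degreeLE_eq_span_X_pow]
    exact FiniteDimensional.span_finset _ _
  have : FiniteDimensional ℂ U := Submodule.finiteDimensional_of_le hUle
  subst hdim
  obtain ⟨lam, hlam⟩ := Dual.exists_fin_finrank_separating
    (fun x : ℝ => (aeval (x : ℂ)).toLinearMap.domRestrict U)
    (fun p hp => Subtype.ext <| eq_zero_of_forall_eval_ofReal_eq_zero (by simpa using hp))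
  have hreal (p : U) (hp : ∀ j, eval (lam j : ℂ) (p : ℂ[X]) = 0) : (p : ℂ[X]) = 0 := by
    simpa using congrArg Subtype.val (hlam p (by simpa using hp))
  refine ⟨fun j => lam j, fun p hpU hp => ?_⟩
  rcases hp with hp | hp
  · exact hreal ⟨p, hpU⟩ hp
  · exact hreal ⟨p, hpU⟩ (by simpa using hp)

/-- Let `U ⊆ ℂ[x]_{≤ d}` be a `k`-dimensional subspace, `k ≤ d`.  Then there
exist `λ 0, …, λ (k-1) ∈ ℂ` such that whenever `p ∈ U` vanishes at all the `λ j`, or at all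
the conjugates `conj (λ j)`, then `p = 0`. -/
theorem exists_scalars_detecting_zero_with_conjugates
    (d k : ℕ) (hk : k ≤ d) (U : Submodule ℂ (Polynomial ℂ))
    (hUle : U ≤ Polynomial.degreeLE ℂ (d : ℕ))
    (hdim : Module.finrank ℂ U = k) :
    ∃ lam : Fin k → ℂ, ∀ p ∈ U,
      ((∀ j, Polynomial.eval (lam j) p = 0) ∨
       (∀ j, Polynomial.eval (starRingEnd ℂ (lam j)) p = 0)) → p = 0 :=
  exists_scalars_detecting_zero_with_conjugates_general d k U hUle hdim
end
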